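/- (Circulant optimizer, Lemma 4.1.) Consider the semidefinite program G = sup{ γ ∈ ℝ : ∃ symmetric (T+1)×(T+1) real matrix M and β ∈ ℝ with M ⪰ 0, β + (1/ε)·tr(Ω M) ≤ 0, and M − [[ (1/2)·I, −(1/2)·1 ],[ −(1/2)·1ᵀ, γT − β ]] ⪰ 0 }, where Ω = [[ v·P + μ̄²·11ᵀ, μ̄·1 ],[ μ̄·1ᵀ, 1 ]], P = circ(ρ) is a symmetric circulant matrix (ρ_t = ρ_{(T−t) mod T}), v ≥ 0, μ̄ ∈ ℝ, and ε ∈ (0,1). If (M, β, γ) is feasible for this program and attains the supremum G, then there exist m : Fin T → ℝ with m_t = m_{(T−t) mod T} for all t and m_T, m_{T+1} ∈ ℝ such that the triple (M', β, γ) with M' = [[circ(m), m_T·1],[m_T·1ᵀ, m_{T+1}]] is also feasible and attains G. -/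

import Mathlib

/-!
Averaging a feasible `M` over the `T` cyclic shifts of the first `T` coordinates (the last
coordinate is fixed) keeps it feasible with the same `β` and `γ`: the data `Ω` and the
constraint matrix are invariant under these shifts, so the trace term does not change, and
positive semidefiniteness survives simultaneous permutation of rows and columns and convex
combinations. A symmetric shift-invariant matrix is a bordered symmetric circulant.
-/

noncomputable section

/-- The circulant matrix `circ c` with entries `c ((j - i) mod T)`. -/
def circ (T : ℕ) (c : Fin T → ℝ) : Matrix (Fin T) (Fin T) ℝ :=
  Matrix.of fun i j => c (j - i)

/-- Bordered matrix `[[C, b·1], [b·1ᵀ, d]]`. -/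
def border (T : ℕ) (C : Matrix (Fin T) (Fin T) ℝ) (b d : ℝ) :
    Matrix (Fin T ⊕ Unit) (Fin T ⊕ Unit) ℝ :=
  Matrix.fromBlocks C
    (Matrix.of fun (_ : Fin T) (_ : Unit) => b)
    (Matrix.of fun (_ : Unit) (_ : Fin T) => b)
    (Matrix.of fun (_ : Unit) (_ : Unit) => d)

/-- The second-order moment matrix `Ω = [[v·P + μ̄²·11ᵀ, μ̄·1], [μ̄·1ᵀ, 1]]`. -/
def momentMatrix (T : ℕ) (v μbar : ℝ) (P : Matrix (Fin T) (Fin T) ℝ) :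
    Matrix (Fin T ⊕ Unit) (Fin T ⊕ Unit) ℝ :=
  border T (v • P + μbar ^ 2 • Matrix.of fun (_ _ : Fin T) => (1 : ℝ)) μbar 1

/-- The matrix `[[(1/2)·I, -(1/2)·1], [-(1/2)·1ᵀ, γT - β]]` appearing in the second
semidefinite constraint. -/
def constrMatrix (T : ℕ) (γ β : ℝ) : Matrix (Fin T ⊕ Unit) (Fin T ⊕ Unit) ℝ :=
  border T ((1 / 2 : ℝ) • (1 : Matrix (Fin T) (Fin T) ℝ)) (-(1 / 2)) (γ * T - β)

/-- Feasibility of `(M, β, γ)` for the semidefinite program defining the worst-case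
growth rate: `M` is symmetric, `M ⪰ 0`, `β + (1/ε)·tr(Ω M) ≤ 0`, and
`M - [[(1/2)·I, -(1/2)·1], [-(1/2)·1ᵀ, γT - β]] ⪰ 0`. -/
def Feasible (T : ℕ) (ε : ℝ) (Ω M : Matrix (Fin T ⊕ Unit) (Fin T ⊕ Unit) ℝ)
    (β γ : ℝ) : Prop :=
  M.IsSymm ∧ M.PosSemidef ∧ β + (1 / ε) * (Ω * M).trace ≤ 0 ∧
    (M - constrMatrix T γ β).PosSemidef

open Matrix

theorem Matrix.trace_submatrix_equiv {m n R : Type*} [Fintype m] [Fintype n]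
    [AddCommMonoid R] (A : Matrix n n R) (e : m ≃ n) :
    (A.submatrix e e).trace = A.trace :=
  e.sum_comp fun i => A i i

theorem Matrix.trace_mul_submatrix_equiv_of_submatrix_eq {n R : Type*} [Fintype n]
    [NonUnitalNonAssocSemiring R] {Ω : Matrix n n R} (A : Matrix n n R) (e : n ≃ n)
    (hΩ : Ω.submatrix e e = Ω) : (Ω * A.submatrix e e).trace = (Ω * A).trace := by
  conv_lhs => rw [← hΩ]
  rw [submatrix_mul_equiv, trace_submatrix_equiv]

theorem circ_add_add {T : ℕ} [NeZero T] (c : Fin T → ℝ) (i j k : Fin T) :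
    circ T c (i + k) (j + k) = circ T c i j := by
  simp only [circ, of_apply, add_sub_add_right_eq_sub]

namespace Circulant

variable {T : ℕ} [NeZero T]

def shift (k : Fin T) : Equiv.Perm (Fin T ⊕ Unit) :=
  (Equiv.addRight k).sumCongr (Equiv.refl Unit)

@[simp] theorem shift_inl (k i : Fin T) : shift k (Sum.inl i) = Sum.inl (i + k) := rfl

@[simp] theorem shift_inr (k : Fin T) (u : Unit) : shift k (Sum.inr u) = Sum.inr u := rfl

theorem shift_shift (j k : Fin T) (x : Fin T ⊕ Unit) : shift j (shift k x) = shift (k + j) x := by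
  rcases x with i | u
  · simp only [shift_inl, add_assoc]
  · rfl

def ShiftInvariant (A : Matrix (Fin T ⊕ Unit) (Fin T ⊕ Unit) ℝ) : Prop :=
  ∀ k, A.submatrix (shift k) (shift k) = A

theorem shiftInvariant_border {C : Matrix (Fin T) (Fin T) ℝ}
    (hC : ∀ i j k, C (i + k) (j + k) = C i j) (b d : ℝ) : ShiftInvariant (border T C b d) := by
  intro k
  ext (i | u) (j | w) <;> simp [border, hC]

theorem shiftInvariant_momentMatrix (v μbar : ℝ) (c : Fin T → ℝ) :
    ShiftInvariant (momentMatrix T v μbar (circ T c)) :=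
  shiftInvariant_border (fun i j k => by simp [circ_add_add]) _ _

theorem shiftInvariant_constrMatrix (γ β : ℝ) : ShiftInvariant (constrMatrix T γ β) :=
  shiftInvariant_border (fun i j k => by simp [one_apply]) _ _

theorem ShiftInvariant.exists_eq_border_circ {A : Matrix (Fin T ⊕ Unit) (Fin T ⊕ Unit) ℝ}
    (hA : ShiftInvariant A) (hsymm : A.IsSymm) :
    ∃ (m : Fin T → ℝ) (mT mT1 : ℝ), (∀ t, m t = m (-t)) ∧ A = border T (circ T m) mT mT1 := by
  have hA' (k : Fin T) (x y) : A (shift k x) (shift k y) = A x y := congrFun (congrFun (hA k) x) y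
  refine ⟨fun t => A (Sum.inl 0) (Sum.inl t), A (Sum.inl 0) (Sum.inr ()),
    A (Sum.inr ()) (Sum.inr ()), fun t => ?_, ?_⟩
  · exact (hsymm.apply _ _).symm.trans (by simpa using hA' t (Sum.inl 0) (Sum.inl (-t)))
  · ext (i | ⟨⟩) (j | ⟨⟩)
    · simpa [border, circ] using hA' i (Sum.inl 0) (Sum.inl (j - i))
    · simpa [border] using hA' i (Sum.inl 0) (Sum.inr ())
    · simpa [border, hsymm.apply] using hA' j (Sum.inl 0) (Sum.inr ())
    · rfl

def cyclicAverage (A : Matrix (Fin T ⊕ Unit) (Fin T ⊕ Unit) ℝ) :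
    Matrix (Fin T ⊕ Unit) (Fin T ⊕ Unit) ℝ :=
  (T : ℝ)⁻¹ • ∑ k, A.submatrix (shift k) (shift k)

theorem shiftInvariant_cyclicAverage (A : Matrix (Fin T ⊕ Unit) (Fin T ⊕ Unit) ℝ) :
    ShiftInvariant (cyclicAverage A) := by
  intro k
  ext x y
  simp only [cyclicAverage, submatrix_apply, Matrix.smul_apply, Matrix.sum_apply, shift_shift]
  congr 1
  exact Fintype.sum_equiv (Equiv.addLeft k) _ _ fun j => rfl

theorem cyclicAverage_eq_self {A : Matrix (Fin T ⊕ Unit) (Fin T ⊕ Unit) ℝ}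
    (hA : ShiftInvariant A) : cyclicAverage A = A := by
  have hA' : ∀ k, A.submatrix (shift k) (shift k) = A := hA
  simp_rw [cyclicAverage, hA', Finset.sum_const, Finset.card_univ, Fintype.card_fin,
    ← Nat.cast_smul_eq_nsmul ℝ, smul_smul, inv_mul_cancel₀ (NeZero.ne (T : ℝ)), one_smul]

theorem cyclicAverage_sub (A B : Matrix (Fin T ⊕ Unit) (Fin T ⊕ Unit) ℝ) :
    cyclicAverage (A - B) = cyclicAverage A - cyclicAverage B := by
  ext x y
  simp [cyclicAverage, Matrix.sum_apply, mul_sub, Finset.sum_sub_distrib]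

theorem _root_.Matrix.PosSemidef.cyclicAverage {A : Matrix (Fin T ⊕ Unit) (Fin T ⊕ Unit) ℝ}
    (hA : A.PosSemidef) : (cyclicAverage A).PosSemidef :=
  (posSemidef_sum _ fun k _ => hA.submatrix (shift k)).smul (by positivity)

theorem trace_mul_cyclicAverage {Ω : Matrix (Fin T ⊕ Unit) (Fin T ⊕ Unit) ℝ}
    (hΩ : ShiftInvariant Ω) (A : Matrix (Fin T ⊕ Unit) (Fin T ⊕ Unit) ℝ) :
    (Ω * cyclicAverage A).trace = (Ω * A).trace := by
  simp [cyclicAverage, Matrix.mul_sum, trace_sum,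
    trace_mul_submatrix_equiv_of_submatrix_eq _ _ (hΩ _), NeZero.ne]

theorem Feasible.cyclicAverage {ε β γ : ℝ} {Ω M : Matrix (Fin T ⊕ Unit) (Fin T ⊕ Unit) ℝ}
    (h : Feasible T ε Ω M β γ) (hΩ : ShiftInvariant Ω) :
    Feasible T ε Ω (cyclicAverage M) β γ := by
  obtain ⟨-, hpsd, htr, hcon⟩ := h
  refine ⟨isHermitian_iff_isSymm.mp hpsd.cyclicAverage.isHermitian, hpsd.cyclicAverage,
    trace_mul_cyclicAverage hΩ M ▸ htr, ?_⟩
  rw [← cyclicAverage_eq_self (shiftInvariant_constrMatrix γ β), ← cyclicAverage_sub]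
  exact hcon.cyclicAverage

end Circulant

open Circulant in
theorem circulant_optimizer (T : ℕ) (hT : 1 ≤ T) (ε : ℝ)
    (ρ : Fin T → ℝ) (v μbar : ℝ)
    (M : Matrix (Fin T ⊕ Unit) (Fin T ⊕ Unit) ℝ) (β γ : ℝ)
    (hfeas : Feasible T ε (momentMatrix T v μbar (circ T ρ)) M β γ) :
    ∃ (m : Fin T → ℝ) (mT mT1 : ℝ), (∀ t : Fin T, m t = m (-t)) ∧
      Feasible T ε (momentMatrix T v μbar (circ T ρ))
        (border T (circ T m) mT mT1) β γ := by
  have : NeZero T := ⟨by omega⟩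
  have havg := hfeas.cyclicAverage (shiftInvariant_momentMatrix v μbar ρ)
  obtain ⟨m, mT, mT1, hm, hM⟩ := (shiftInvariant_cyclicAverage M).exists_eq_border_circ havg.1
  exact ⟨m, mT, mT1, hm, hM ▸ havg⟩
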